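/- For the coupled joint process X' of two walkers on a connected graph G, the meeting time satisfies M_{X'}(x,y) ≤ φ(x,y) < 2·H_{P^B}(G) for all starting vertices x, y, where φ(x,y) = H_{P^B}(x,y) + H_{P^B}(y,t) − H_{P^B}(t,y) for a hidden vertex t of the biased random walk. -/

import Mathlib

open Finset

/-- Transition matrix of the biased random walk `X_B` on a graph `G` on `N` vertices:
`P^B_{ij} = (1/N)(1/|N_i| + 1/|N_j|)` for edges, `P^B_{ii} = 1 - Σ_{k ∈ N_i} P^B_{ik}`,
and `0` otherwise. -/
noncomputable def PB (N : ℕ) (G : SimpleGraph (Fin N)) [DecidableRel G.Adj] (i j : Fin N) : ℝ :=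
  if G.Adj i j then (1 / (N : ℝ)) * (1 / (G.degree i : ℝ) + 1 / (G.degree j : ℝ))
  else if i = j then
    1 - ∑ k ∈ G.neighborFinset i,
      (1 / (N : ℝ)) * (1 / (G.degree i : ℝ) + 1 / (G.degree k : ℝ))
  else 0

/-- `H` is the vector of expected hitting times of the Markov chain with transition
matrix `P^B` on the vertices of `G`: `H i j` is the expected number of steps a walk
started at `i` takes to first reach `j`, characterized by the first-step equations. -/
def IsHittingTime (N : ℕ) (G : SimpleGraph (Fin N)) [DecidableRel G.Adj]
    (H : Fin N → Fin N → ℝ) : Prop :=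
  (∀ y, H y y = 0) ∧
  ∀ x y, x ≠ y → H x y = 1 + ∑ k : Fin N, PB N G x k * H k y

/-- Total probability that the biased walk at `x` moves (to some neighbor). -/
noncomputable def PBsum (N : ℕ) (G : SimpleGraph (Fin N)) [DecidableRel G.Adj]
    (x : Fin N) : ℝ :=
  ∑ i ∈ G.neighborFinset x, PB N G x i

/-- `M` is the vector of expected meeting times of the joint process `X` of two opposite
strong opinions at `x` and `y`: if `x ∉ N_y`, exactly one walker moves at a time (each
single move having probability `P^B`), and both stay with probability
`1 - Σ_{i∈N_x}P^B_{xi} - Σ_{j∈N_y}P^B_{yj}`; if `x ∈ N_y`, additionally the walkers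
swap positions through the common edge (which counts as meeting) with probability
`P^B_{xy}`, and both stay with probability
`1 - Σ_{i∈N_x}P^B_{xi} - Σ_{j∈N_y}P^B_{yj} + P^B_{xy}`. -/
def IsMeetingTimeX (N : ℕ) (G : SimpleGraph (Fin N)) [DecidableRel G.Adj]
    (M : Fin N → Fin N → ℝ) : Prop :=
  (∀ x, M x x = 0) ∧
  (∀ x y, x ≠ y → ¬ G.Adj x y →
    M x y = 1 + (∑ i ∈ G.neighborFinset x, PB N G x i * M i y)
      + (∑ j ∈ G.neighborFinset y, PB N G y j * M x j)
      + (1 - PBsum N G x - PBsum N G y) * M x y) ∧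
  (∀ x y, G.Adj x y →
    M x y = 1 + (∑ i ∈ (G.neighborFinset x).erase y, PB N G x i * M i y)
      + (∑ j ∈ (G.neighborFinset y).erase x, PB N G y j * M x j)
      + (1 - PBsum N G x - PBsum N G y + PB N G x y) * M x y)

/-- `M` is the vector of expected meeting times of the coupled process `X'` of two
walkers at `x` and `y`: exactly one walker moves at a time (each single move having
probability `P^B`); if `x ∈ N_y` the walkers meet (at `x` or at `y`) with probability
`2·P^B_{xy}`; both walkers stay with probability
`1 - Σ_{i∈N_x}P^B_{xi} - Σ_{j∈N_y}P^B_{yj}`. -/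
def IsMeetingTimeX' (N : ℕ) (G : SimpleGraph (Fin N)) [DecidableRel G.Adj]
    (M : Fin N → Fin N → ℝ) : Prop :=
  (∀ x, M x x = 0) ∧
  (∀ x y, x ≠ y → ¬ G.Adj x y →
    M x y = 1 + (∑ i ∈ G.neighborFinset x, PB N G x i * M i y)
      + (∑ j ∈ G.neighborFinset y, PB N G y j * M x j)
      + (1 - PBsum N G x - PBsum N G y) * M x y) ∧
  (∀ x y, G.Adj x y →
    M x y = 1 + (∑ i ∈ (G.neighborFinset x).erase y, PB N G x i * M i y)
      + (∑ j ∈ (G.neighborFinset y).erase x, PB N G y j * M x j)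
      + (1 - PBsum N G x - PBsum N G y) * M x y)

/-!
`P^B` is symmetric and stochastic. Pairing the first-step equations
`(I - P) H(·, y) = 1 - N δ_y` with `H(·, x)` through the symmetry of `P` gives
`N (H x y - H y x) = ∑ₖ H k y - ∑ₖ H k x`: the antisymmetric part of `H` is a gradient.
Hence `φ` is symmetric and, up to a constant, equals `H(·, y)` in its first argument, so a step
of either walker lowers `φ` by exactly one in expectation. On the other side, `M x x = 0` absorbs
the meeting terms of `X'`, and after eliminating the holding probability `M` satisfies
`2 M x y = 1 + (P M(·, y)) x + (P M(x, ·)) y` off the diagonal. So `φ - M` is strictly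
superharmonic for the chain on pairs in which a fair coin picks the walker that moves, and it is
nonnegative on the diagonal because `t` is hidden; the minimum principle gives `M ≤ φ`.
Finally `φ x y ≤ 2 H(G) - H t y`, where `H t y ≥ 1` unless `t = y`.
-/

theorem nonneg_of_forall_nonneg_or_sum_mul_lt {ι : Type*} [Fintype ι] (Q : ι → ι → ℝ)
    (hQ : ∀ p q, 0 ≤ Q p q) (hQ1 : ∀ p, ∑ q, Q p q = 1) (D : ι → ℝ)
    (hD : ∀ p, 0 ≤ D p ∨ ∑ q, Q p q * D q < D p) (p : ι) : 0 ≤ D p := by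
  have : Nonempty ι := ⟨p⟩
  obtain ⟨p₀, hp₀⟩ := Finite.exists_min D
  refine (hD p₀).elim (fun h => h.trans (hp₀ p)) fun hlt => absurd hlt (not_lt.mpr ?_)
  calc D p₀ = ∑ q, Q p₀ q * D p₀ := by rw [← sum_mul, hQ1, one_mul]
    _ ≤ ∑ q, Q p₀ q * D q :=
      sum_le_sum fun q _ => mul_le_mul_of_nonneg_left (hp₀ q) (hQ p₀ q)

-- `IsHittingTime N G H` unfolds to `IsHittingTimeFor (PB N G) H`.
def IsHittingTimeFor {V : Type*} [Fintype V] (P H : V → V → ℝ) : Prop :=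
  (∀ y, H y y = 0) ∧ ∀ x y, x ≠ y → H x y = 1 + ∑ k, P x k * H k y

def potential {V : Type*} (H : V → V → ℝ) (t x y : V) : ℝ :=
  H x y + H y t - H t y

noncomputable def pairKernel {V : Type*} [DecidableEq V] (P : V → V → ℝ) (p q : V × V) :
    ℝ :=
  (P p.1 q.1 * (if q.2 = p.2 then 1 else 0) + (if q.1 = p.1 then 1 else 0) * P p.2 q.2) / 2

theorem pairKernel_nonneg {V : Type*} [DecidableEq V] {P : V → V → ℝ}
    (hP : ∀ i j, 0 ≤ P i j) (p q : V × V) : 0 ≤ pairKernel P p q := by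
  unfold pairKernel
  split_ifs <;> linarith [hP p.1 q.1, hP p.2 q.2]

section SymmetricStochastic

variable {V : Type*} [Fintype V] {P H : V → V → ℝ}

theorem sum_sum_mul_comm (hP : ∀ i j, P i j = P j i) (f g : V → ℝ) :
    ∑ k, (∑ m, P k m * f m) * g k = ∑ k, f k * ∑ m, P k m * g m := by
  simp_rw [sum_mul, mul_sum]
  rw [sum_comm]
  refine sum_congr rfl fun k _ => sum_congr rfl fun m _ => ?_
  rw [hP]; ring

namespace IsHittingTimeFor

theorem sum_mul_of_ne (hH : IsHittingTimeFor P H) {x y : V} (hxy : x ≠ y) :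
    ∑ k, P x k * H k y = H x y - 1 := by
  linarith [hH.2 x y hxy]

theorem nonneg (hP : ∀ i j, 0 ≤ P i j) (hrow : ∀ i, ∑ j, P i j = 1)
    (hH : IsHittingTimeFor P H) (x y : V) : 0 ≤ H x y := by
  refine nonneg_of_forall_nonneg_or_sum_mul_lt P hP hrow (fun k => H k y) (fun k => ?_) x
  rcases eq_or_ne k y with rfl | hky
  · exact .inl (hH.1 k).ge
  · exact .inr (by linarith [hH.sum_mul_of_ne hky])

theorem one_le (hP : ∀ i j, 0 ≤ P i j) (hrow : ∀ i, ∑ j, P i j = 1)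
    (hH : IsHittingTimeFor P H) {x y : V} (hxy : x ≠ y) : 1 ≤ H x y := by
  rw [hH.2 x y hxy]
  linarith [sum_nonneg fun k (_ : k ∈ univ) => mul_nonneg (hP x k) (hH.nonneg hP hrow k y)]

theorem sum_mul_eq [DecidableEq V] (hP : ∀ i j, P i j = P j i) (hrow : ∀ i, ∑ j, P i j = 1)
    (hH : IsHittingTimeFor P H) (x y : V) :
    ∑ k, P x k * H k y = H x y - 1 + if x = y then (Fintype.card V : ℝ) else 0 := by
  rcases ne_or_eq x y with hxy | rfl
  · simp [hxy, hH.sum_mul_of_ne hxy]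
  -- `P` is doubly stochastic, so the defects `H k x - (P H(·, x)) k` sum to zero.
  have hdefect : ∑ k, (H k x - ∑ m, P k m * H m x) = 0 := by
    have hbal := sum_sum_mul_comm hP (fun k => H k x) 1
    simp only [Pi.one_apply, mul_one, hrow] at hbal
    rw [sum_sub_distrib, hbal, sub_self]
  have hoff : ∀ k ∈ univ.erase x, H k x - ∑ m, P k m * H m x = 1 := fun k hk => by
    rw [hH.sum_mul_of_ne (ne_of_mem_erase hk)]; ring
  rw [← add_sum_erase _ _ (mem_univ x), sum_congr rfl hoff, sum_const,
    card_erase_of_mem (mem_univ x), card_univ, nsmul_one,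
    Nat.cast_sub (Fintype.card_pos_iff.mpr ⟨x⟩), hH.1] at hdefect
  simp only [hH.1, if_true]
  push_cast at hdefect
  linarith

theorem card_mul_sub_eq (hP : ∀ i j, P i j = P j i) (hrow : ∀ i, ∑ j, P i j = 1)
    (hH : IsHittingTimeFor P H) (x y : V) :
    (Fintype.card V : ℝ) * (H x y - H y x) = ∑ k, H k y - ∑ k, H k x := by
  classical
  have h := sum_sum_mul_comm hP (fun k => H k y) (fun k => H k x)
  simp only [hH.sum_mul_eq hP hrow] at h
  simp only [add_mul, sub_mul, mul_add, mul_sub, ite_mul, mul_ite, zero_mul, mul_zero, one_mul,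
    mul_one, sum_add_distrib, sum_sub_distrib, sum_ite_eq', mem_univ, if_true] at h
  linarith

end IsHittingTimeFor

end SymmetricStochastic

section Potential

variable {V : Type*} [Fintype V] {P H : V → V → ℝ}

theorem potential_comm (hP : ∀ i j, P i j = P j i) (hrow : ∀ i, ∑ j, P i j = 1)
    (hH : IsHittingTimeFor P H) (t x y : V) : potential H t x y = potential H t y x := by
  have : Nonempty V := ⟨x⟩
  have hN : (Fintype.card V : ℝ) ≠ 0 := Nat.cast_ne_zero.mpr Fintype.card_ne_zero
  apply mul_left_cancel₀ hN
  unfold potential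
  linear_combination hH.card_mul_sub_eq hP hrow x y + hH.card_mul_sub_eq hP hrow y t
    - hH.card_mul_sub_eq hP hrow x t

theorem sum_mul_potential_left (hrow : ∀ i, ∑ j, P i j = 1) (hH : IsHittingTimeFor P H)
    (t : V) {x y : V} (hxy : x ≠ y) :
    ∑ k, P x k * potential H t k y = potential H t x y - 1 := by
  simp only [potential, mul_sub, mul_add, sum_add_distrib, sum_sub_distrib, ← sum_mul, hrow,
    one_mul, hH.sum_mul_of_ne hxy]
  ring

theorem sum_mul_potential_right (hP : ∀ i j, P i j = P j i) (hrow : ∀ i, ∑ j, P i j = 1)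
    (hH : IsHittingTimeFor P H) (t : V) {x y : V} (hxy : x ≠ y) :
    ∑ k, P y k * potential H t x k = potential H t x y - 1 := by
  simp only [potential_comm hP hrow hH t x]
  exact sum_mul_potential_left hrow hH t hxy.symm

theorem potential_self_nonneg (hH : IsHittingTimeFor P H) {t : V}
    (ht : ∀ v, H t v ≤ H v t) (x : V) : 0 ≤ potential H t x x := by
  simp only [potential, hH.1]
  linarith [ht x]

theorem potential_lt_two_mul [Nontrivial V] (hP : ∀ i j, 0 ≤ P i j)
    (hrow : ∀ i, ∑ j, P i j = 1) (hH : IsHittingTimeFor P H) {HG : ℝ}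
    (hHG : ∀ a b, H a b ≤ HG) (t x y : V) : potential H t x y < 2 * HG := by
  obtain ⟨a, b, hab⟩ := exists_pair_ne V
  have hHG_pos : 0 < HG := by linarith [hH.one_le hP hrow hab, hHG a b]
  unfold potential
  rcases eq_or_ne t y with rfl | hty
  · linarith [hHG x t]
  · linarith [hHG x y, hHG y t, hH.one_le hP hrow hty]

end Potential

section PairKernel

variable {V : Type*} [Fintype V] [DecidableEq V] {P : V → V → ℝ}

theorem sum_pairKernel_mul (D : V × V → ℝ) (p : V × V) :
    ∑ q, pairKernel P p q * D q
      = (∑ k, P p.1 k * D (k, p.2) + ∑ k, P p.2 k * D (p.1, k)) / 2 := by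
  simp [pairKernel, Fintype.sum_prod_type, add_mul, add_div, div_mul_eq_mul_div, sum_add_distrib,
    ← sum_div, mul_ite, ite_mul, sum_ite_irrel]

theorem sum_pairKernel (hrow : ∀ i, ∑ j, P i j = 1) (p : V × V) :
    ∑ q, pairKernel P p q = 1 := by
  simpa [hrow] using sum_pairKernel_mul (P := P) (fun _ => 1) p

end PairKernel

section BiasedWalk

variable {N : ℕ} {G : SimpleGraph (Fin N)} [DecidableRel G.Adj]

theorem PB_comm (i j : Fin N) : PB N G i j = PB N G j i := by
  unfold PB
  by_cases hij : G.Adj i j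
  · rw [if_pos hij, if_pos hij.symm, add_comm]
  · rw [if_neg hij, if_neg (mt G.adj_symm hij)]
    rcases eq_or_ne i j with rfl | hne
    · rfl
    · rw [if_neg hne, if_neg hne.symm]

theorem PB_of_adj {i j : Fin N} (h : G.Adj i j) :
    PB N G i j = 1 / N * (1 / G.degree i + 1 / G.degree j) :=
  if_pos h

theorem PB_self (x : Fin N) : PB N G x x = 1 - PBsum N G x := by
  rw [PB, if_neg (G.irrefl), if_pos rfl, PBsum]
  congr 1
  exact sum_congr rfl fun k hk => (PB_of_adj ((G.mem_neighborFinset x k).mp hk)).symm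

theorem PB_eq_zero {i j : Fin N} (h : ¬ G.Adj i j) (hne : i ≠ j) : PB N G i j = 0 := by
  rw [PB, if_neg h, if_neg hne]

theorem PBsum_le_one (x : Fin N) : PBsum N G x ≤ 1 := by
  have hN : (G.degree x : ℝ) + 1 ≤ N := by
    exact_mod_cast (G.degree_lt_card_verts x).trans_eq (Fintype.card_fin N)
  have hterm : ∀ k ∈ G.neighborFinset x, PB N G x k ≤ 1 / N * (1 / G.degree x + 1) := by
    intro k hk
    have hxk := (G.mem_neighborFinset x k).mp hk
    have hk : (1 : ℝ) ≤ G.degree k := by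
      exact_mod_cast (G.degree_pos_iff_exists_adj k).mpr ⟨x, hxk.symm⟩
    rw [PB_of_adj hxk]
    gcongr
    exact div_le_one_of_le₀ hk (by positivity)
  calc PBsum N G x ≤ G.degree x * (1 / N * (1 / G.degree x + 1)) := by
        rw [PBsum, ← nsmul_eq_mul, ← G.card_neighborFinset_eq_degree]
        exact sum_le_card_nsmul _ _ _ hterm
    _ = (G.degree x / G.degree x + G.degree x) / N := by ring
    _ ≤ 1 := by
        rw [div_le_one (by linarith [(G.degree x).cast_nonneg (α := ℝ)])]
        linarith [div_self_le_one (G.degree x : ℝ)]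

theorem PB_nonneg (i j : Fin N) : 0 ≤ PB N G i j := by
  by_cases hij : G.Adj i j
  · rw [PB_of_adj hij]; positivity
  rcases eq_or_ne i j with rfl | hne
  · rw [PB_self]; linarith [PBsum_le_one (G := G) i]
  · rw [PB_eq_zero hij hne]

theorem sum_PB_mul (x : Fin N) (f : Fin N → ℝ) :
    ∑ k, PB N G x k * f k
      = ∑ k ∈ G.neighborFinset x, PB N G x k * f k + (1 - PBsum N G x) * f x := by
  rw [← sum_subset (subset_univ (insert x (G.neighborFinset x))), sum_insert (by simp), PB_self,
    add_comm]
  intro k _ hk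
  simp only [mem_insert, SimpleGraph.mem_neighborFinset, not_or] at hk
  rw [PB_eq_zero hk.2 (Ne.symm hk.1), zero_mul]

theorem sum_PB (x : Fin N) : ∑ k, PB N G x k = 1 := by
  simpa [PBsum] using sum_PB_mul (G := G) x 1

end BiasedWalk

namespace IsMeetingTimeX'

variable {N : ℕ} {G : SimpleGraph (Fin N)} [DecidableRel G.Adj] {M : Fin N → Fin N → ℝ}

theorem two_mul_eq (hM : IsMeetingTimeX' N G M) {x y : Fin N} (hxy : x ≠ y) :
    2 * M x y = 1 + ∑ k, PB N G x k * M k y + ∑ k, PB N G y k * M x k := by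
  have hstep : M x y = 1 + ∑ i ∈ G.neighborFinset x, PB N G x i * M i y
      + ∑ j ∈ G.neighborFinset y, PB N G y j * M x j
      + (1 - PBsum N G x - PBsum N G y) * M x y := by
    by_cases hadj : G.Adj x y
    · have h := hM.2.2 x y hadj
      rwa [sum_erase _ (by rw [hM.1, mul_zero]), sum_erase _ (by rw [hM.1, mul_zero])] at h
    · exact hM.2.1 x y hxy hadj
  rw [sum_PB_mul x, sum_PB_mul y]
  linarith

theorem le_potential (hM : IsMeetingTimeX' N G M) {H : Fin N → Fin N → ℝ}
    (hH : IsHittingTime N G H) {t : Fin N} (ht : ∀ v, H t v ≤ H v t) (x y : Fin N) :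
    M x y ≤ potential H t x y := by
  suffices h : 0 ≤ potential H t x y - M x y by linarith
  refine nonneg_of_forall_nonneg_or_sum_mul_lt (pairKernel (PB N G))
    (pairKernel_nonneg PB_nonneg) (sum_pairKernel sum_PB)
    (fun p => potential H t p.1 p.2 - M p.1 p.2) (fun ⟨a, b⟩ => ?_) (x, y)
  rcases eq_or_ne a b with rfl | hab
  · left
    simpa [hM.1] using potential_self_nonneg hH ht a
  · right
    have hφa := sum_mul_potential_left sum_PB hH t hab
    have hφb := sum_mul_potential_right PB_comm sum_PB hH t hab
    have hM2 := hM.two_mul_eq hab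
    simp only [sum_pairKernel_mul, mul_sub, sum_sub_distrib]
    linarith

end IsMeetingTimeX'

theorem coupled_meeting_time_le_potential_general (N : ℕ) (hN : 2 ≤ N)
    (G : SimpleGraph (Fin N)) [DecidableRel G.Adj]
    (H : Fin N → Fin N → ℝ) (hH : IsHittingTime N G H) (HG : ℝ)
    (hHG : IsGreatest {h : ℝ | ∃ a b : Fin N, h = H a b} HG)
    (t : Fin N) (ht : ∀ v : Fin N, H t v ≤ H v t)
    (M : Fin N → Fin N → ℝ) (hM : IsMeetingTimeX' N G M) :
    ∀ x y : Fin N, M x y ≤ H x y + H y t - H t y ∧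
      H x y + H y t - H t y < 2 * HG := by
  have : Nontrivial (Fin N) := Fin.nontrivial_iff_two_le.mpr hN
  intro x y
  exact ⟨hM.le_potential hH ht x y,
    potential_lt_two_mul PB_nonneg sum_PB hH (fun a b => hHG.2 ⟨a, b, rfl⟩) t x y⟩

/-- For the coupled joint process `X'` of two walkers on a connected
graph `G`, the meeting time satisfies `M_{X'}(x,y) ≤ φ(x,y) < 2·H_{P^B}(G)` for all
starting vertices `x, y`, where `φ(x,y) = H(x,y) + H(y,t) − H(t,y)` for a hidden
vertex `t` of the biased random walk (`t` is hidden if `H(t,v) ≤ H(v,t)` for all `v`). -/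
theorem coupled_meeting_time_le_potential (N : ℕ) (hN : 2 ≤ N)
    (G : SimpleGraph (Fin N)) [DecidableRel G.Adj] (hG : G.Connected)
    (H : Fin N → Fin N → ℝ) (hH : IsHittingTime N G H) (HG : ℝ)
    (hHG : IsGreatest {h : ℝ | ∃ a b : Fin N, h = H a b} HG)
    (t : Fin N) (ht : ∀ v : Fin N, H t v ≤ H v t)
    (M : Fin N → Fin N → ℝ) (hM : IsMeetingTimeX' N G M) :
    ∀ x y : Fin N, M x y ≤ H x y + H y t - H t y ∧
      H x y + H y t - H t y < 2 * HG :=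
  coupled_meeting_time_le_potential_general N hN G H hH HG hHG t ht M hM
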